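/- For any three distinct points P_i, P_j, P_k of a generic configuration of n points in the plane, n(P_i,P_j) + n(P_j,P_k) + n(P_i,P_k) ≡ (n−3) (mod 2); in particular the number of pairs among {P_i,P_j,P_k} for which n ≢ n−3 (mod 2) is even. -/

import Mathlib

open scoped Classical

noncomputable section

/-- Orientation determinant of two vectors in the plane. -/
def det2 (u v : ℝ × ℝ) : ℝ := u.1 * v.2 - u.2 * v.1

/-- The line through `A` and `B` separates the points `P` and `Q`
(they lie in distinct open half-planes determined by the line). -/
def SepLine (A B P Q : ℝ × ℝ) : Prop :=
  det2 (B - A) (P - A) * det2 (B - A) (Q - A) < 0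

/-- A finite planar point set is a generic configuration if no three of its
points are collinear. -/
def Generic (C : Finset (ℝ × ℝ)) : Prop :=
  ∀ a ∈ C, ∀ b ∈ C, ∀ c ∈ C, a ≠ b → a ≠ c → b ≠ c →
    ¬ Collinear ℝ ({a, b, c} : Set (ℝ × ℝ))

/-- `nsep C P Q` is the number of lines spanned by (unordered) pairs of points of
`C \ {P,Q}` that separate `P` from `Q`. -/
def nsep (C : Finset (ℝ × ℝ)) (P Q : ℝ × ℝ) : ℕ :=
  (((C \ {P, Q}).powersetCard 2).filter
    (fun s => ∃ A ∈ s, ∃ B ∈ s, A ≠ B ∧ SepLine A B P Q)).card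

/-- The Orchard relation: `P ∼ Q` iff `n(P,Q) ≡ n - 3 (mod 2)` where `n = |C|`. -/
def Orchard (C : Finset (ℝ × ℝ)) (P Q : ℝ × ℝ) : Prop :=
  (nsep C P Q : ℤ) ≡ (C.card : ℤ) - 3 [ZMOD 2]

/-- A configuration is monochromatic if all its points are Orchard-equivalent. -/
def Mono (C : Finset (ℝ × ℝ)) : Prop :=
  ∀ P ∈ C, ∀ Q ∈ C, P ≠ Q → Orchard C P Q

/-- A configuration is in convex position if each of its points is a vertex of
the convex hull. -/
def ConvexPos (C : Finset (ℝ × ℝ)) : Prop :=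
  ∀ P ∈ C, P ∉ convexHull ℝ ((C : Set (ℝ × ℝ)) \ {P})

/-! Count the three numbers together, line by line, modulo 2. A line avoiding `Pi, Pj, Pk`
leaves each of them on one side, so it separates an even number of the three pairs; a line
through two of them separates none. The line through `Pk` and a point `B` outside the triple can
only separate `Pi` from `Pj`, and of the three lines `B Pi, B Pj, B Pk` an odd number separates
the other two points: with `a, b, c` the orientations of `(Pi, Pj), (Pj, Pk), (Pk, Pi)` seen from
`B`, they are the positive ones among `b c, c a, a b`, and an odd number of the pairs of three
nonzero reals have equal signs. So the sum is `n - 3` modulo 2, and a pair `P, Q` violates the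
Orchard congruence exactly when `n(P,Q) - (n - 3)` is odd. -/

lemma det2_swap (u v : ℝ × ℝ) : det2 u v = -det2 v u := by
  simp only [det2]; ring

lemma det2_sub_swap (A B P : ℝ × ℝ) : det2 (A - B) (P - B) = -det2 (B - A) (P - A) := by
  simp only [det2, Prod.fst_sub, Prod.snd_sub]; ring

lemma sepLine_comm (A B P Q : ℝ × ℝ) : SepLine A B P Q ↔ SepLine B A P Q := by
  rw [SepLine, SepLine, det2_sub_swap A B P, det2_sub_swap A B Q, neg_mul_neg]

lemma collinear_of_det2_eq_zero {a b c : ℝ × ℝ} (h : det2 (b - a) (c - a) = 0) :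
    Collinear ℝ ({a, b, c} : Set (ℝ × ℝ)) := by
  rcases eq_or_ne a b with rfl | hab
  · simpa using collinear_pair ℝ a c
  set u := b - a
  set v := c - a
  have hN : u.1 ^ 2 + u.2 ^ 2 ≠ 0 := by
    intro h0
    have h1 : u.1 = 0 := by nlinarith
    have h2 : u.2 = 0 := by nlinarith
    exact hab (sub_eq_zero.1 (Prod.ext h1 h2)).symm
  -- `c - a` is the multiple of `b - a` given by orthogonal projection
  have hv : v = ((u.1 * v.1 + u.2 * v.2) / (u.1 ^ 2 + u.2 ^ 2)) • u := by
    simp only [det2] at h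
    ext <;> simp only [Prod.smul_fst, Prod.smul_snd, smul_eq_mul] <;> field_simp
    · linear_combination -u.2 * h
    · linear_combination u.1 * h
  refine (collinear_iff_of_mem (Set.mem_insert a _)).2 ⟨u, ?_⟩
  rintro p (rfl | rfl | rfl)
  · exact ⟨0, by simp⟩
  · exact ⟨1, by simp [u]⟩
  · exact ⟨_, by rw [vadd_eq_add, ← hv, sub_add_cancel]⟩

lemma Generic.det2_ne_zero {C : Finset (ℝ × ℝ)} (hC : Generic C) {a b c : ℝ × ℝ}
    (ha : a ∈ C) (hb : b ∈ C) (hc : c ∈ C) (hab : a ≠ b) (hac : a ≠ c) (hbc : b ≠ c) :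
    det2 (b - a) (c - a) ≠ 0 :=
  fun h => hC a ha b hb c hc hab hac hbc (collinear_of_det2_eq_zero h)

def negIndicator (x : ℝ) : ZMod 2 := if x < 0 then 1 else 0

lemma negIndicator_mul {x y : ℝ} (hx : x ≠ 0) (hy : y ≠ 0) :
    negIndicator (x * y) = negIndicator x + negIndicator y := by
  unfold negIndicator
  rcases hx.lt_or_gt with hx | hx <;> rcases hy.lt_or_gt with hy | hy
  · simp [hx, hy, (mul_pos_of_neg_of_neg hx hy).not_gt]; decide
  · simp [hx, hy.not_gt, mul_neg_of_neg_of_pos hx hy]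
  · simp [hx.not_gt, hy, mul_neg_of_pos_of_neg hx hy]
  · simp [hx.not_gt, hy.not_gt, (mul_pos hx hy).not_gt]

lemma negIndicator_neg {x : ℝ} (hx : x ≠ 0) : negIndicator (-x) = negIndicator x + 1 := by
  unfold negIndicator
  rcases hx.lt_or_gt with hx | hx
  · simp [hx, (neg_pos.2 hx).not_gt]; decide
  · simp [hx.not_gt, neg_lt_zero.2 hx]

lemma ite_sepLine_eq {A B P Q : ℝ × ℝ} (hP : det2 (B - A) (P - A) ≠ 0)
    (hQ : det2 (B - A) (Q - A) ≠ 0) :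
    (if SepLine A B P Q then 1 else 0 : ZMod 2) =
      negIndicator (det2 (B - A) (P - A)) + negIndicator (det2 (B - A) (Q - A)) :=
  negIndicator_mul hP hQ

open Finset

lemma Finset.card_filter_powersetCard_two_insert {α : Type*} [DecidableEq α] {a : α}
    {s : Finset α} (ha : a ∉ s) (p : Finset α → Prop) [DecidablePred p] :
    #{t ∈ (insert a s).powersetCard 2 | p t} =
      #{t ∈ s.powersetCard 2 | p t} + #{b ∈ s | p {a, b}} := by
  have hdisj : Disjoint (s.powersetCard 2) ((s.powersetCard 1).image (insert a)) := by
    simp only [disjoint_left, mem_image, mem_powersetCard, not_exists, not_and]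
    rintro t ⟨hts, -⟩ u - rfl
    exact ha (hts (mem_insert_self a u))
  have hinj : Set.InjOn (insert a) (s.powersetCard 1 : Set (Finset α)) := by
    intro u hu v hv huv
    have hau : a ∉ u := fun h => ha ((mem_powersetCard.1 hu).1 h)
    have hav : a ∉ v := fun h => ha ((mem_powersetCard.1 hv).1 h)
    rw [← erase_insert hau, ← erase_insert hav, huv]
  rw [powersetCard_succ_insert ha 1, filter_union,
    card_union_of_disjoint (disjoint_filter_filter hdisj)]
  congr 1
  rw [card_filter, sum_image hinj, powersetCard_one, sum_map, ← card_filter]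
  rfl

lemma exists_sepLine_pair_iff {A B P Q : ℝ × ℝ} (hAB : A ≠ B) :
    (∃ x ∈ ({A, B} : Finset (ℝ × ℝ)), ∃ y ∈ ({A, B} : Finset (ℝ × ℝ)), x ≠ y ∧ SepLine x y P Q) ↔
      SepLine A B P Q := by
  simp only [mem_insert, mem_singleton, exists_eq_or_imp, exists_eq_left, ne_eq,
    not_true_eq_false, false_and, or_false, false_or, hAB, hAB.symm, not_false_eq_true, true_and]
  exact or_iff_left_of_imp (sepLine_comm B A P Q).1

lemma nsep_eq_card_add_card {C : Finset (ℝ × ℝ)} {P Q R : ℝ × ℝ} (hR : R ∈ C) (hRP : R ≠ P)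
    (hRQ : R ≠ Q) :
    nsep C P Q =
      #{s ∈ (C \ {P, Q, R}).powersetCard 2 | ∃ A ∈ s, ∃ B ∈ s, A ≠ B ∧ SepLine A B P Q} +
        #{B ∈ C \ {P, Q, R} | SepLine R B P Q} := by
  have hRD : R ∉ C \ {P, Q, R} := by simp
  have hD : C \ {P, Q} = insert R (C \ {P, Q, R}) := by
    ext x
    simp only [mem_sdiff, mem_insert, mem_singleton]
    grind
  rw [nsep, hD, card_filter_powersetCard_two_insert hRD]
  congr 1
  refine congrArg card (filter_congr ?_)
  intro B hB
  refine exists_sepLine_pair_iff ?_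
  rintro rfl
  exact hRD hB

section Generic

variable {C : Finset (ℝ × ℝ)} (hC : Generic C) {Pi Pj Pk : ℝ × ℝ}
  (hi : Pi ∈ C) (hj : Pj ∈ C) (hk : Pk ∈ C)
include hC hi hj hk

-- each indicator is the sum of the sides of the line on which its two points lie
lemma Generic.ite_exists_sepLine_add_add_eq_zero {s : Finset (ℝ × ℝ)}
    (hs : s ∈ (C \ {Pi, Pj, Pk}).powersetCard 2) :
    (if ∃ A ∈ s, ∃ B ∈ s, A ≠ B ∧ SepLine A B Pi Pj then 1 else 0 : ZMod 2) +
      (if ∃ A ∈ s, ∃ B ∈ s, A ≠ B ∧ SepLine A B Pj Pk then 1 else 0) +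
      (if ∃ A ∈ s, ∃ B ∈ s, A ≠ B ∧ SepLine A B Pi Pk then 1 else 0) = 0 := by
  obtain ⟨hsub, hcard⟩ := mem_powersetCard.1 hs
  obtain ⟨A, B, hAB, rfl⟩ := card_eq_two.1 hcard
  have hA := hsub (mem_insert_self A {B})
  have hB := hsub (mem_insert_of_mem (mem_singleton_self B))
  simp only [mem_sdiff, mem_insert, mem_singleton, not_or] at hA hB
  obtain ⟨hA, hAi, hAj, hAk⟩ := hA
  obtain ⟨hB, hBi, hBj, hBk⟩ := hB
  have si := hC.det2_ne_zero hA hB hi hAB hAi hBi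
  have sj := hC.det2_ne_zero hA hB hj hAB hAj hBj
  have sk := hC.det2_ne_zero hA hB hk hAB hAk hBk
  simp only [exists_sepLine_pair_iff hAB]
  rw [ite_sepLine_eq si sj, ite_sepLine_eq sj sk, ite_sepLine_eq si sk]
  ring_nf
  reduce_mod_char

lemma Generic.ite_sepLine_add_add_eq_one {B : ℝ × ℝ} (hB : B ∈ C \ {Pi, Pj, Pk})
    (hij : Pi ≠ Pj) (hik : Pi ≠ Pk) (hjk : Pj ≠ Pk) :
    (if SepLine Pk B Pi Pj then 1 else 0 : ZMod 2) + (if SepLine Pi B Pj Pk then 1 else 0) +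
      (if SepLine Pj B Pi Pk then 1 else 0) = 1 := by
  simp only [mem_sdiff, mem_insert, mem_singleton, not_or] at hB
  obtain ⟨hB, hBi, hBj, hBk⟩ := hB
  have oij := hC.det2_ne_zero hB hi hj hBi hBj hij
  have ojk := hC.det2_ne_zero hB hj hk hBj hBk hjk
  have oki := hC.det2_ne_zero hB hk hi hBk hBi hik.symm
  have oji := hC.det2_ne_zero hB hj hi hBj hBi hij.symm
  have okj := hC.det2_ne_zero hB hk hj hBk hBj hjk.symm
  have oik := hC.det2_ne_zero hB hi hk hBi hBk hik
  rw [sepLine_comm Pk, sepLine_comm Pi, sepLine_comm Pj, ite_sepLine_eq oki okj,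
    ite_sepLine_eq oij oik, ite_sepLine_eq oji ojk, det2_swap (Pk - B) (Pj - B),
    det2_swap (Pi - B) (Pk - B), det2_swap (Pj - B) (Pi - B), negIndicator_neg oij,
    negIndicator_neg ojk, negIndicator_neg oki]
  ring_nf
  reduce_mod_char

lemma Generic.natCast_nsep_add_add (hij : Pi ≠ Pj) (hik : Pi ≠ Pk) (hjk : Pj ≠ Pk) :
    ((nsep C Pi Pj + nsep C Pj Pk + nsep C Pi Pk : ℕ) : ZMod 2) = #C - 3 := by
  have hD : #(C \ {Pi, Pj, Pk}) + 3 = #C := by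
    have h3 : #{Pi, Pj, Pk} = 3 := by
      rw [card_insert_of_notMem (by simp [hij, hik]), card_pair hjk]
    rw [← h3, card_sdiff_add_card_eq_card (by simp [insert_subset_iff, hi, hj, hk])]
  set D := C \ {Pi, Pj, Pk}
  suffices h : ((nsep C Pi Pj + nsep C Pj Pk + nsep C Pi Pk : ℕ) : ZMod 2) = #D by
    rw [h, ← hD]; push_cast; ring
  rw [nsep_eq_card_add_card hk hik.symm hjk.symm, nsep_eq_card_add_card hi hij hik,
    nsep_eq_card_add_card hj hij.symm hjk, show ({Pj, Pk, Pi} : Finset (ℝ × ℝ)) = {Pi, Pj, Pk} by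
      ext; simp only [mem_insert, mem_singleton]; tauto,
    show ({Pi, Pk, Pj} : Finset (ℝ × ℝ)) = {Pi, Pj, Pk} by rw [pair_comm]]
  push_cast [natCast_card_filter]
  calc _ = ∑ s ∈ D.powersetCard 2,
        ((if ∃ A ∈ s, ∃ B ∈ s, A ≠ B ∧ SepLine A B Pi Pj then 1 else 0 : ZMod 2) +
          (if ∃ A ∈ s, ∃ B ∈ s, A ≠ B ∧ SepLine A B Pj Pk then 1 else 0) +
          (if ∃ A ∈ s, ∃ B ∈ s, A ≠ B ∧ SepLine A B Pi Pk then 1 else 0)) +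
        ∑ B ∈ D, ((if SepLine Pk B Pi Pj then 1 else 0 : ZMod 2) +
          (if SepLine Pi B Pj Pk then 1 else 0) + (if SepLine Pj B Pi Pk then 1 else 0)) := by
        simp only [sum_add_distrib]; ring
    _ = #D := by
        rw [sum_eq_zero fun s hs => hC.ite_exists_sepLine_add_add_eq_zero hi hj hk hs,
          sum_congr rfl fun B hB => hC.ite_sepLine_add_add_eq_one hi hj hk hB hij hik hjk,
          sum_const, nsmul_one, zero_add]

end Generic

lemma natCast_ite_not_orchard (C : Finset (ℝ × ℝ)) (P Q : ℝ × ℝ) :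
    ((if ¬ Orchard C P Q then 1 else 0 : ℕ) : ZMod 2) = nsep C P Q - (#C - 3) := by
  have h : Orchard C P Q ↔ (nsep C P Q : ZMod 2) = #C - 3 :=
    (ZMod.intCast_eq_intCast_iff (nsep C P Q) (#C - 3) 2).symm.trans (by push_cast; rfl)
  split_ifs with ho <;> rw [h] at ho <;> revert ho <;>
    generalize (nsep C P Q : ZMod 2) = x <;> generalize (#C : ZMod 2) - 3 = y <;> revert x y <;>
    decide

/-- For any three distinct points of a generic configuration of `n` points,
`n(P_i,P_j) + n(P_j,P_k) + n(P_i,P_k) ≡ n - 3 (mod 2)`; in particular the number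
of pairs among them violating the Orchard congruence is even. -/
theorem nsep_triple_parity (C : Finset (ℝ × ℝ)) (hC : Generic C)
    (Pi Pj Pk : ℝ × ℝ) (hi : Pi ∈ C) (hj : Pj ∈ C) (hk : Pk ∈ C)
    (hij : Pi ≠ Pj) (hik : Pi ≠ Pk) (hjk : Pj ≠ Pk) :
    ((nsep C Pi Pj + nsep C Pj Pk + nsep C Pi Pk : ℕ) : ℤ) ≡ (C.card : ℤ) - 3 [ZMOD 2] ∧
    Even (((if ¬ Orchard C Pi Pj then 1 else 0) +
           (if ¬ Orchard C Pj Pk then 1 else 0) +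
           (if ¬ Orchard C Pi Pk then 1 else 0) : ℕ)) := by
  have hsum := hC.natCast_nsep_add_add hi hj hk hij hik hjk
  refine ⟨(ZMod.intCast_eq_intCast_iff _ _ 2).1 (by exact_mod_cast hsum), ?_⟩
  rw [← ZMod.natCast_eq_zero_iff_even]
  simp only [Nat.cast_add, natCast_ite_not_orchard] at hsum ⊢
  have two : (2 : ZMod 2) = 0 := rfl
  linear_combination hsum - ((#C : ZMod 2) - 3) * two
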